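/- Let λ > 0, K > 0, and let u: cl Ω × (0,∞) → ℝ satisfy |∇u|² + λu² ≤ K²e^{−2λt} and u ≥ 0 in Ω × (0,∞) with u = 0 on ∂Ω. Fix t > 0, let z be a maximum point of u(·,t) with value M(t), and y the nearest boundary point to z. Then √λ·M(t)·e^{λt}/K ≤ √λ·d_Γ(z), i.e., d_Γ(z) ≥ M(t)·e^{λt}/K. -/

import Mathlib

/-!
Let `d` be the distance from `z` to `∂Ω`. The ball of radius `d` about `z` lies in `Ω`, and there
`|∇u(·,t)|² ≤ K²e^{-2λt} - λu² ≤ K²e^{-2λt}`, so `u(·,t)` is `Ke^{-λt}`-Lipschitz on that ball and,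
by continuity, on its closure, which contains the nearest boundary point `y`. Since `u(y,t) = 0`,
this gives `u(z,t) ≤ Ke^{-λt}·|z - y| = Ke^{-λt}·d`.
-/

open Metric Set

theorem norm_gradient_eq_norm_fderiv {F : Type*} [NormedAddCommGroup F] [InnerProductSpace ℝ F]
    [CompleteSpace F] (f : F → ℝ) (x : F) : ‖gradient f x‖ = ‖fderiv ℝ f x‖ := by
  rw [← toDual_gradient, LinearIsometryEquiv.norm_map]

theorem Convex.norm_image_sub_le_of_norm_fderiv_le_of_mem_closure
    {E F : Type*} [NormedAddCommGroup E] [NormedSpace ℝ E] [NormedAddCommGroup F] [NormedSpace ℝ F]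
    {f : E → F} {s : Set E} {C : ℝ} {x y : E} (hs : Convex ℝ s)
    (hf : ∀ x ∈ s, DifferentiableAt ℝ f x) (bound : ∀ x ∈ s, ‖fderiv ℝ f x‖ ≤ C)
    (hcont : ContinuousOn f (closure s)) (hx : x ∈ closure s) (hy : y ∈ closure s) :
    ‖f y - f x‖ ≤ C * ‖y - x‖ := by
  obtain ⟨w, hw⟩ : s.Nonempty := closure_nonempty_iff.1 ⟨x, hx⟩
  have hC : 0 ≤ C := (norm_nonneg _).trans (bound w hw)
  have hlip : LipschitzOnWith C.toNNReal f s :=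
    hs.lipschitzOnWith_of_nnnorm_fderiv_le hf fun x hx => by
      rw [← NNReal.coe_le_coe, coe_nnnorm, Real.coe_toNNReal _ hC]
      exact bound x hx
  simpa [dist_eq_norm, Real.coe_toNNReal _ hC] using (hlip.closure hcont).dist_le_mul y hy x hx

theorem Metric.ball_infDist_frontier_subset {E : Type*} [NormedAddCommGroup E] [NormedSpace ℝ E]
    [FiniteDimensional ℝ E] {s : Set E} {x : E} (hx : x ∈ s) (hs : (frontier s).Nonempty) :
    ball x (infDist x (frontier s)) ⊆ s := by
  have hs_ne : s ≠ univ := by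
    rintro rfl
    simp at hs
  obtain ⟨w, hw, hxw⟩ := exists_mem_frontier_infDist_compl_eq_dist hx hs_ne
  calc ball x (infDist x (frontier s)) ⊆ ball x (infDist x sᶜ) :=
        ball_subset_ball (hxw ▸ infDist_le_dist_of_mem hw)
    _ ⊆ s := ball_infDist_compl_subset

theorem le_mul_exp_neg_of_sq_add_mul_sq_le {a b lam K s : ℝ} (ha : 0 ≤ a) (hlam : 0 ≤ lam)
    (hK : 0 ≤ K) (h : a ^ 2 + lam * b ^ 2 ≤ K ^ 2 * Real.exp (-2 * s)) :
    a ≤ K * Real.exp (-s) := by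
  have hsq : a ^ 2 ≤ (K * Real.exp (-s)) ^ 2 := by
    rw [mul_pow, ← Real.exp_nat_mul, Nat.cast_ofNat, show (2 : ℝ) * -s = -2 * s by ring]
    linarith [mul_nonneg hlam (sq_nonneg b)]
  exact (pow_le_pow_iff_left₀ ha (by positivity) two_ne_zero).1 hsq

theorem stmt_12_general {N : ℕ} (Ω : Set (EuclideanSpace ℝ (Fin N)))
    (hΩopen : IsOpen Ω)
    (lam K : ℝ) (hlam : 0 < lam) (hK : 0 < K)
    (u : EuclideanSpace ℝ (Fin N) → ℝ → ℝ)
    (hu_C1 : ∀ t > (0:ℝ), ContDiffOn ℝ 1 (fun x => u x t) (closure Ω))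
    (hbound : ∀ t > (0:ℝ), ∀ x ∈ closure Ω,
      ‖gradient (fun x => u x t) x‖ ^ 2 + lam * (u x t) ^ 2 ≤ K ^ 2 * Real.exp (-2 * lam * t))
    (hbdry : ∀ t > (0:ℝ), ∀ x ∈ frontier Ω, u x t = 0)
    (t : ℝ) (ht : 0 < t)
    (z : EuclideanSpace ℝ (Fin N)) (hz : z ∈ Ω)
    (y : EuclideanSpace ℝ (Fin N)) (hy : y ∈ frontier Ω)
    (hnear : dist z y = infDist z (frontier Ω)) :
    Real.sqrt lam * (u z t) * Real.exp (lam * t) / K ≤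
      Real.sqrt lam * infDist z (frontier Ω) := by
  set d := infDist z (frontier Ω)
  have hd : 0 < d := (isClosed_frontier.notMem_iff_infDist_pos ⟨y, hy⟩).1 fun hzf =>
    (hΩopen.frontier_eq ▸ hzf).2 hz
  have hball : ball z d ⊆ Ω := ball_infDist_frontier_subset hz ⟨y, hy⟩
  have hdiff : ∀ x ∈ ball z d, DifferentiableAt ℝ (u · t) x := fun x hx =>
    (((hu_C1 t ht).mono (hball.trans subset_closure)).differentiableOn one_ne_zero x hx
      ).differentiableAt (isOpen_ball.mem_nhds hx)
  have hgrad : ∀ x ∈ ball z d, ‖fderiv ℝ (u · t) x‖ ≤ K * Real.exp (-(lam * t)) := fun x hx => by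
    have := hbound t ht x (subset_closure (hball hx))
    rw [norm_gradient_eq_norm_fderiv, show -2 * lam * t = -2 * (lam * t) by ring] at this
    exact le_mul_exp_neg_of_sq_add_mul_sq_le (norm_nonneg _) hlam.le hK.le this
  have hy_mem : y ∈ closure (ball z d) := by
    rw [closure_ball z hd.ne']
    exact mem_closedBall.2 (by rw [dist_comm, hnear])
  have hlip := (convex_ball z d).norm_image_sub_le_of_norm_fderiv_le_of_mem_closure hdiff hgrad
    ((hu_C1 t ht).continuousOn.mono (closure_mono hball)) (subset_closure (mem_ball_self hd))
    hy_mem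
  have hu_le : u z t ≤ K * Real.exp (-(lam * t)) * d := by
    rw [hbdry t ht y hy, zero_sub, norm_neg, ← dist_eq_norm y, dist_comm, hnear] at hlip
    exact (Real.le_norm_self _).trans hlip
  have hratio : u z t * Real.exp (lam * t) / K ≤ d := by
    rw [div_le_iff₀' hK]
    calc u z t * Real.exp (lam * t) ≤ K * Real.exp (-(lam * t)) * d * Real.exp (lam * t) :=
          mul_le_mul_of_nonneg_right hu_le (Real.exp_pos _).le
      _ = K * d := by rw [Real.exp_neg]; field_simp
  rw [mul_assoc, mul_div_assoc]
  gcongr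

/-- if `|∇u|² + λu² ≤ K²e^{−2λt}` with `u ≥ 0` in `Ω × (0,∞)` and `u = 0`
on `∂Ω`, then for fixed `t > 0`, a maximum point `z` of `u(·,t)` with value `M(t)`
satisfies `√λ·M(t)·e^{λt}/K ≤ √λ·d_Γ(z)`, i.e. `d_Γ(z) ≥ M(t)·e^{λt}/K`. -/
theorem stmt_12 {N : ℕ} (hN : 2 ≤ N) (Ω : Set (EuclideanSpace ℝ (Fin N)))
    (hΩopen : IsOpen Ω) (hΩconn : IsConnected Ω) (hΩbdd : Bornology.IsBounded Ω)
    (lam K : ℝ) (hlam : 0 < lam) (hK : 0 < K)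
    (u : EuclideanSpace ℝ (Fin N) → ℝ → ℝ)
    (hu_C1 : ∀ t > (0:ℝ), ContDiffOn ℝ 1 (fun x => u x t) (closure Ω))
    (hbound : ∀ t > (0:ℝ), ∀ x ∈ closure Ω,
      ‖gradient (fun x => u x t) x‖ ^ 2 + lam * (u x t) ^ 2 ≤ K ^ 2 * Real.exp (-2 * lam * t))
    (hnonneg : ∀ t > (0:ℝ), ∀ x ∈ Ω, 0 ≤ u x t)
    (hbdry : ∀ t > (0:ℝ), ∀ x ∈ frontier Ω, u x t = 0)
    (t : ℝ) (ht : 0 < t)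
    (z : EuclideanSpace ℝ (Fin N)) (hz : z ∈ Ω)
    (hzmax : ∀ x ∈ closure Ω, u x t ≤ u z t)
    (y : EuclideanSpace ℝ (Fin N)) (hy : y ∈ frontier Ω)
    (hnear : dist z y = infDist z (frontier Ω)) :
    Real.sqrt lam * (u z t) * Real.exp (lam * t) / K ≤
      Real.sqrt lam * infDist z (frontier Ω) :=
  stmt_12_general Ω hΩopen lam K hlam hK u hu_C1 hbound hbdry t ht z hz y hy hnear
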